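/- Every friendship digraph is either a fancy wheel digraph or a regular digraph. Moreover, if it is a regular digraph, then there is an integer k ≥ 2 such that every vertex has out-degree k and in-degree k and the digraph has exactly k² − k + 1 vertices. -/

import Mathlib

open Finset

/-- A fancy wheel digraph: there is exactly one vertex `v` with
`N⁺(v) = N⁻(v) = V − {v}`, and every other vertex has exactly one out-neighbor
different from `v` and exactly one in-neighbor different from `v` (i.e. `D − v`
is a vertex-disjoint union of directed cycles). -/
def IsFancyWheel {V : Type*} (D : V → V → Prop) : Prop :=
  ∃ v : V, (∀ w : V, w ≠ v → D v w ∧ D w v) ∧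
    (∀ u : V, (∀ w : V, w ≠ u → D u w ∧ D w u) → u = v) ∧
    (∀ u : V, u ≠ v → (∃! w : V, w ≠ v ∧ D u w) ∧ (∃! w : V, w ≠ v ∧ D w u))

/-!
Counting shows that out-degree equals in-degree at every vertex and that the reversed digraph is
again a friendship digraph. If `¬ D u y`, sending an in-neighbour `z` of `y` to the common
out-neighbour of `z` and `u` is injective, and dually, so `u` and `y` have equal out-degrees.
Hence vertices of different out-degrees are joined in both directions; unless some vertex is
joined both ways to all others, this forces all out-degrees to be equal, say to `k`, and sorting the
vertices `≠ u` by their common out-neighbour with `u` gives `n - 1 = k (k - 1)`. If `x` is joined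
both ways to all others, every other vertex `y` has out-neighbourhood `{x, w}`, with `w` the common
out-neighbour of `x` and `y`: this is a fancy wheel, or the complete digraph on three vertices when
`x` is not the only such vertex.
-/

section FriendshipDigraph

variable {V : Type*}

def IsFriendship (D : V → V → Prop) : Prop :=
  ∀ u v, u ≠ v → ∃! w, D u w ∧ D v w

def IsUniversal (D : V → V → Prop) (x : V) : Prop :=
  ∀ w, w ≠ x → D x w ∧ D w x

lemma IsUniversal.flip {D : V → V → Prop} {x : V} (hx : IsUniversal D x) :
    IsUniversal (flip D) x :=
  fun w hw => (hx w hw).symm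

section Neighborhoods

variable [Fintype V] (D : V → V → Prop) [DecidableRel D]

def outNbrs (v : V) : Finset V := {w | D v w}

def inNbrs (v : V) : Finset V := {w | D w v}

instance : DecidableRel (flip D) := fun a b => inferInstanceAs (Decidable (D b a))

variable {D}

@[simp] lemma mem_outNbrs {v w : V} : w ∈ outNbrs D v ↔ D v w := by simp [outNbrs]

@[simp] lemma mem_inNbrs {v w : V} : w ∈ inNbrs D v ↔ D w v := by simp [inNbrs]

variable (D)

lemma sum_card_outNbrs_eq_sum_card_inNbrs : ∑ v, #(outNbrs D v) = ∑ v, #(inNbrs D v) :=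
  sum_card_bipartiteAbove_eq_sum_card_bipartiteBelow D (s := univ) (t := univ)

lemma sum_card_commonInNbrs [DecidableEq V] :
    ∑ p ∈ univ.offDiag, #{x | D x p.1 ∧ D x p.2} = ∑ x, #(outNbrs D x).offDiag := by
  refine (sum_card_bipartiteAbove_eq_sum_card_bipartiteBelow
    (fun (p : V × V) x => D x p.1 ∧ D x p.2)).trans (sum_congr rfl fun x _ => congrArg card ?_)
  ext p
  simp only [bipartiteBelow, mem_filter, mem_offDiag, mem_univ, mem_outNbrs, true_and]
  tauto

end Neighborhoods

namespace IsFriendship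

variable {D : V → V → Prop} (hD : IsFriendship D)
include hD

lemma unique_commonInNbr {u v w w' : V} (huv : u ≠ v) (hw : D w u ∧ D w v)
    (hw' : D w' u ∧ D w' v) : w = w' := by
  by_contra hne
  obtain ⟨z, -, hz⟩ := hD w w' hne
  exact huv ((hz u ⟨hw.1, hw'.1⟩).trans (hz v ⟨hw.2, hw'.2⟩).symm)

lemma existsUnique_ne_adj (hirr : ∀ v, ¬ D v v) {x y : V} (hx : IsUniversal D x) (hy : y ≠ x) :
    ∃! w, w ≠ x ∧ D y w := by
  have key (w : V) : (w ≠ x ∧ D y w) ↔ (D x w ∧ D y w) :=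
    ⟨fun h => ⟨(hx w h.1).1, h.2⟩, fun h => ⟨by rintro rfl; exact hirr _ h.1, h.2⟩⟩
  simpa only [key] using hD x y hy.symm

variable [Fintype V] [DecidableRel D]

lemma card_commonOutNbrs_eq_one {u v : V} (huv : u ≠ v) : #{w | D u w ∧ D v w} = 1 := by
  simpa [card_eq_one_iff_existsUnique] using hD u v huv

lemma card_inNbrs_le_card_outNbrs_of_not_adj {u y : V} (h : ¬ D u y) :
    #(inNbrs D y) ≤ #(outNbrs D u) := by
  refine card_le_card_of_forall_subsingleton D (fun z hz => ?_) (fun w hw => ?_)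
  · have hzu : z ≠ u := by rintro rfl; exact h (mem_inNbrs.mp hz)
    obtain ⟨w, ⟨hzw, huw⟩, -⟩ := hD z u hzu
    exact ⟨w, mem_outNbrs.mpr huw, hzw⟩
  · have hwy : w ≠ y := by rintro rfl; exact h (mem_outNbrs.mp hw)
    rintro z ⟨hz, hzw⟩ z' ⟨hz', hz'w⟩
    exact hD.unique_commonInNbr hwy ⟨hzw, mem_inNbrs.mp hz⟩ ⟨hz'w, mem_inNbrs.mp hz'⟩

lemma card_outNbrs_eq_card_inNbrs (hirr : ∀ v, ¬ D v v) (v : V) :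
    #(outNbrs D v) = #(inNbrs D v) := by
  have hle (v : V) := hD.card_inNbrs_le_card_outNbrs_of_not_adj (hirr v)
  exact ((sum_eq_sum_iff_of_le fun v _ => hle v).mp
    (sum_card_outNbrs_eq_sum_card_inNbrs D).symm v (mem_univ v)).symm

protected lemma flip (hirr : ∀ v, ¬ D v v) : IsFriendship (flip D) := by
  classical
  have hle : ∀ p ∈ univ.offDiag, #{x | D x p.1 ∧ D x p.2} ≤ 1 := fun p hp =>
    card_le_one.mpr fun a ha b hb => hD.unique_commonInNbr (mem_offDiag.mp hp).2.2
      (mem_filter.mp ha).2 (mem_filter.mp hb).2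
  have hsum : ∑ p ∈ univ.offDiag, #{x | D x p.1 ∧ D x p.2} = ∑ _p ∈ univ.offDiag, 1 :=
    calc _ = ∑ x, #(outNbrs D x).offDiag := sum_card_commonInNbrs D
      _ = ∑ x, #(inNbrs D x).offDiag := by
        simp only [offDiag_card, hD.card_outNbrs_eq_card_inNbrs hirr]
      _ = ∑ p ∈ univ.offDiag, #{w | D p.1 w ∧ D p.2 w} := (sum_card_commonInNbrs (flip D)).symm
      _ = _ := sum_congr rfl fun p hp => hD.card_commonOutNbrs_eq_one (mem_offDiag.mp hp).2.2
  intro u v huv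
  simpa [card_eq_one_iff_existsUnique, flip] using
    (sum_eq_sum_iff_of_le hle).mp hsum (u, v) (by simpa using huv)

lemma card_outNbrs_eq_of_not_adj (hirr : ∀ v, ¬ D v v) {u y : V} (h : ¬ D u y) :
    #(outNbrs D u) = #(outNbrs D y) := by
  rw [hD.card_outNbrs_eq_card_inNbrs hirr y]
  exact le_antisymm ((hD.flip hirr).card_inNbrs_le_card_outNbrs_of_not_adj h)
    (hD.card_inNbrs_le_card_outNbrs_of_not_adj h)

lemma card_outNbrs_eq_of_forall_not_isUniversal (hirr : ∀ v, ¬ D v v)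
    (hno : ∀ x, ¬ IsUniversal D x) (s t : V) : #(outNbrs D s) = #(outNbrs D t) := by
  by_contra hst
  have hcross (p q : V) (hpq : #(outNbrs D p) ≠ #(outNbrs D q)) : D p q ∧ D q p :=
    ⟨by_contra fun h => hpq (hD.card_outNbrs_eq_of_not_adj hirr h),
      by_contra fun h => hpq (hD.card_outNbrs_eq_of_not_adj hirr h).symm⟩
  obtain ⟨w, hws, hw⟩ : ∃ w, w ≠ s ∧ ¬ (D s w ∧ D w s) := by simpa [IsUniversal] using hno s
  obtain ⟨z, hzt, hz⟩ : ∃ z, z ≠ t ∧ ¬ (D t z ∧ D z t) := by simpa [IsUniversal] using hno t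
  have hw : #(outNbrs D w) = #(outNbrs D s) := by_contra fun h => hw (hcross s w (Ne.symm h))
  have hz : #(outNbrs D z) ≠ #(outNbrs D s) := fun h => hz (hcross t z (h ▸ Ne.symm hst))
  -- `s ≠ w` would both be common in-neighbours of `t ≠ z`
  exact hws (hD.unique_commonInNbr hzt.symm
    ⟨(hcross w t (hw ▸ hst)).1, (hcross w z (hw ▸ Ne.symm hz)).1⟩
    ⟨(hcross s t hst).1, (hcross s z (Ne.symm hz)).1⟩)

lemma sum_card_inNbrs_sub_one (u : V) :
    ∑ x ∈ outNbrs D u, (#(inNbrs D x) - 1) = Fintype.card V - 1 := by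
  classical
  calc ∑ x ∈ outNbrs D u, (#(inNbrs D x) - 1)
      = ∑ x ∈ outNbrs D u, #((univ.erase u).bipartiteBelow D x) := sum_congr rfl fun x hx => by
        rw [← card_erase_of_mem (mem_inNbrs.mpr (mem_outNbrs.mp hx))]
        congr 1; ext; simp [and_comm]
    _ = ∑ v ∈ univ.erase u, #((outNbrs D u).bipartiteAbove D v) :=
        (sum_card_bipartiteAbove_eq_sum_card_bipartiteBelow D).symm
    _ = ∑ v ∈ univ.erase u, 1 := sum_congr rfl fun v hv => by
        rw [← hD.card_commonOutNbrs_eq_one (ne_of_mem_erase hv).symm]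
        congr 1; ext; simp
    _ = Fintype.card V - 1 := by simp [card_erase_of_mem]

lemma card_outNbrs_eq_two (hirr : ∀ v, ¬ D v v) {x y : V} (hx : IsUniversal D x) (hy : y ≠ x) :
    #(outNbrs D y) = 2 := by
  classical
  have hsplit : outNbrs D y = insert x ({w | w ≠ x ∧ D y w} : Finset V) := by
    ext w
    by_cases hw : w = x
    · simp [hw, (hx y hy).2]
    · simp [hw]
  rw [hsplit, card_insert_of_notMem (by simp), card_eq_one_iff_existsUnique.mpr
    (by simpa using hD.existsUnique_ne_adj hirr hx hy)]

end IsFriendship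

lemma IsUniversal.card_outNbrs [Fintype V] {D : V → V → Prop} [DecidableRel D]
    (hirr : ∀ v, ¬ D v v) {x : V} (hx : IsUniversal D x) :
    #(outNbrs D x) = Fintype.card V - 1 := by
  classical
  have : outNbrs D x = univ.erase x := by
    ext w
    simp only [mem_outNbrs, mem_erase, mem_univ, and_true]
    exact ⟨fun h => by rintro rfl; exact hirr _ h, fun hw => (hx w hw).1⟩
  rw [this, card_erase_of_mem (mem_univ x), card_univ]

end FriendshipDigraph

theorem friendship_digraph_theorem_general
    {V : Type*} [Fintype V] (D : V → V → Prop) [DecidableRel D]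
    (irrefl : ∀ v : V, ¬ D v v)
    (friendship : ∀ u v : V, u ≠ v → ∃! w : V, D u w ∧ D v w)
    (nontrivial : 1 < Fintype.card V) :
    IsFancyWheel D ∨
      ∃ k : ℕ, 2 ≤ k ∧
        (∀ v : V, (univ.filter (fun w => D v w)).card = k ∧
          (univ.filter (fun w => D w v)).card = k) ∧
        Fintype.card V = k ^ 2 - k + 1 := by
  have hD : IsFriendship D := friendship
  have hin (v : V) := (hD.card_outNbrs_eq_card_inNbrs irrefl v).symm
  by_cases huniv : ∃ x, IsUniversal D x
  · obtain ⟨x, hx⟩ := huniv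
    by_cases hunique : ∀ u, IsUniversal D u → u = x
    · exact Or.inl ⟨x, hx, hunique, fun u hu => ⟨hD.existsUnique_ne_adj irrefl hx hu,
        (hD.flip irrefl).existsUnique_ne_adj irrefl hx.flip hu⟩⟩
    push Not at hunique
    obtain ⟨u, hu, hux⟩ := hunique
    have hn : Fintype.card V = 3 := by
      have := hu.card_outNbrs irrefl
      have := hD.card_outNbrs_eq_two irrefl hx hux
      omega
    have hout (v : V) : #(outNbrs D v) = 2 := by
      rcases eq_or_ne v x with rfl | hvx
      · rw [hx.card_outNbrs irrefl, hn]
      · exact hD.card_outNbrs_eq_two irrefl hx hvx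
    exact Or.inr ⟨2, le_rfl, fun v => ⟨hout v, (hin v).trans (hout v)⟩, hn⟩
  push Not at huniv
  obtain ⟨v₀⟩ : Nonempty V := Fintype.card_pos_iff.mp (by omega)
  set k := #(outNbrs D v₀)
  have hout (v : V) : #(outNbrs D v) = k :=
    hD.card_outNbrs_eq_of_forall_not_isUniversal irrefl huniv v v₀
  have hk : k * (k - 1) = Fintype.card V - 1 := by
    simpa [(hin _).trans (hout _), hout] using hD.sum_card_inNbrs_sub_one v₀
  have hk2 : 2 ≤ k := by
    by_contra! h
    interval_cases k <;> omega
  refine Or.inr ⟨k, hk2, fun v => ⟨hout v, (hin v).trans (hout v)⟩, ?_⟩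
  rw [sq, ← Nat.mul_sub_one, hk]
  omega

/-- digraph version of the Friendship Theorem: every friendship digraph is
a fancy wheel digraph or a regular digraph; in the regular case there is an integer `k ≥ 2`
such that every vertex has out-degree `k` and in-degree `k`, and the order is `k² − k + 1`. -/
theorem friendship_digraph_theorem
    {V : Type*} [Fintype V] [DecidableEq V] (D : V → V → Prop) [DecidableRel D]
    (irrefl : ∀ v : V, ¬ D v v)
    (friendship : ∀ u v : V, u ≠ v → ∃! w : V, D u w ∧ D v w)
    (nontrivial : 1 < Fintype.card V) :
    IsFancyWheel D ∨
      ∃ k : ℕ, 2 ≤ k ∧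
        (∀ v : V, (univ.filter (fun w => D v w)).card = k ∧
          (univ.filter (fun w => D w v)).card = k) ∧
        Fintype.card V = k ^ 2 - k + 1 :=
  friendship_digraph_theorem_general D irrefl friendship nontrivial
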